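/- The function g_α(s) = (1 - s²/12 - sinc²(s/2))/s^α, extended by g_α(0) = 0, is continuously differentiable on [0,2] for every α ∈ (1,3). -/

import Mathlib

noncomputable def sinc (x : ℝ) : ℝ := if x = 0 then 1 else Real.sin x / x

noncomputable def ga (α s : ℝ) : ℝ :=
  if s = 0 then 0 else (1 - s ^ 2 / 12 - (sinc (s / 2)) ^ 2) / s ^ α

open FormalMultilinearSeries

noncomputable def acoef : ℕ → ℝ :=
  fun m => if Even m then -2 * (-1) ^ (m / 2) / (Nat.factorial (m + 6)) else 0

lemma acoef_norm_le (m : ℕ) : ‖acoef m‖ ≤ 2 / Nat.factorial m := by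
  unfold acoef
  split_ifs with h
  · have h1 : ‖(-2 * (-1 : ℝ) ^ (m / 2) / (Nat.factorial (m + 6)))‖
        = 2 / (Nat.factorial (m + 6)) := by
      rw [norm_div, norm_mul]
      simp [Real.norm_natCast, abs_of_nonneg]
    rw [h1]
    apply div_le_div_of_nonneg_left (by norm_num)
      (by exact_mod_cast Nat.factorial_pos m)
      (by exact_mod_cast Nat.factorial_le (by omega))
  · simp only [norm_zero]
    positivity

lemma acoef_summable (r : ℝ) : Summable fun n => ‖acoef n * r ^ n‖ := by
  apply Summable.of_nonneg_of_le (fun n => norm_nonneg _)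
    (fun n => ?_) (((Real.summable_pow_div_factorial |r|).mul_left 2))
  rw [norm_mul, norm_pow, Real.norm_eq_abs]
  calc ‖acoef n‖ * |r| ^ n ≤ 2 / Nat.factorial n * |r| ^ n := by
        gcongr; exact acoef_norm_le n
    _ = 2 * (|r| ^ n / Nat.factorial n) := by ring

noncomputable def gfun : ℝ → ℝ := ofScalarsSum acoef

lemma gfun_hasSum (s : ℝ) : HasSum (fun n => acoef n * s ^ n) (gfun s) := by
  have h := ((acoef_summable s).of_norm).hasSum
  have he : gfun s = ∑' n, acoef n * s ^ n := by
    rw [gfun, ofScalars_sum_eq]; simp [smul_eq_mul]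
  rwa [he]

lemma gfun_analytic (x : ℝ) : AnalyticAt ℝ gfun x := by
  have hrad : (ofScalars ℝ acoef).radius = ⊤ := by
    apply FormalMultilinearSeries.radius_eq_top_of_summable_norm
    intro r
    apply Summable.of_nonneg_of_le (fun n => by positivity) (fun n => ?_)
      (by simpa [norm_mul, norm_pow, abs_of_nonneg r.coe_nonneg] using acoef_summable r)
    rw [ofScalars_norm, Real.norm_eq_abs]
  have h : HasFPowerSeriesOnBall gfun (ofScalars ℝ acoef) 0 ⊤ := by
    have := (ofScalars ℝ acoef).hasFPowerSeriesOnBall (by rw [hrad]; simp)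
    rwa [hrad] at this
  exact h.analyticAt_of_mem (by simp)

lemma key (s : ℝ) : 2 * Real.cos s - 2 + s ^ 2 - s ^ 4 / 12 = s ^ 6 * gfun s := by
  have h1 : HasSum (fun k : ℕ => acoef (2 * k) * s ^ (2 * k)) (gfun s) := by
    have := gfun_hasSum s
    refine (Function.Injective.hasSum_iff (f := fun n => acoef n * s ^ n)
      (fun a b h => by omega) ?_).mpr this
    intro m hm
    have : ¬ Even m := by
      simp only [Set.mem_range, not_exists] at hm
      rintro ⟨k, hk⟩
      exact hm k (by omega)
    simp [acoef, this]
  have h2 : HasSum (fun k : ℕ => s ^ 6 * (acoef (2 * k) * s ^ (2 * k))) (s ^ 6 * gfun s) :=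
    h1.mul_left _
  have h3 : HasSum (fun n : ℕ => 2 * ((-1) ^ n * s ^ (2 * n) / ↑(2 * n).factorial))
      (2 * Real.cos s) := (Real.hasSum_cos s).mul_left 2
  have h4 : HasSum (fun n : ℕ => 2 * ((-1) ^ (n + 3) * s ^ (2 * (n + 3)) / ((2 * (n + 3)).factorial : ℝ)))
      (2 * Real.cos s - 2 + s ^ 2 - s ^ 4 / 12) := by
    have h5 := (hasSum_nat_add_iff' (f := fun n : ℕ =>
      2 * ((-1) ^ n * s ^ (2 * n) / ((2 * n).factorial : ℝ))) 3).mpr h3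
    convert h5 using 1
    · exact rfl
    rw [Finset.sum_range_succ, Finset.sum_range_succ, Finset.sum_range_one]
    norm_num [Nat.factorial]
    ring
  refine h4.unique (h2.congr_fun fun k => ?_)
  have he : Even (2 * k) := ⟨k, by ring⟩
  have : (2 * k) / 2 = k := by omega
  simp only [acoef, he, if_true, this]
  have hfact : ((2 * k + 6).factorial : ℝ) ≠ 0 := by
    exact_mod_cast Nat.factorial_ne_zero _
  rw [show 2 * (k + 3) = 2 * k + 6 by ring]
  field_simp
  ring

theorem stmt_5 (α : ℝ) (hα : 1 < α) (hα3 : α < 3) :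
    ContDiffOn ℝ 1 (ga α) (Set.Icc (0 : ℝ) 2) := by
  have h4α : ((1 : ℕ) : ℝ) ≤ 4 - α := by push_cast; linarith
  have hsmooth : ContDiffOn ℝ 1 (fun s : ℝ => s ^ (4 - α) * gfun s) (Set.Icc (0 : ℝ) 2) := by
    apply ContDiffOn.mul
    · have h := (Real.contDiff_rpow_const_of_le h4α).contDiffOn
        (s := Set.Icc (0:ℝ) 2)
      exact_mod_cast h
    · exact fun x _ => (gfun_analytic x).contDiffAt.contDiffWithinAt
  apply hsmooth.congr
  intro s hs
  rcases eq_or_ne s 0 with rfl | hs0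
  · simp [ga, Real.zero_rpow (by intro h; linarith [h] : (4 : ℝ) - α ≠ 0)]
  · have hspos : 0 < s := lt_of_le_of_ne hs.1 (Ne.symm hs0)
    have hs2 : s / 2 ≠ 0 := by positivity
    rw [ga, if_neg hs0, sinc, if_neg hs2]
    have hnum : 1 - s ^ 2 / 12 - (Real.sin (s / 2) / (s / 2)) ^ 2 = s ^ 4 * gfun s := by
      have hk := key s
      have hhalf : Real.sin (s / 2) ^ 2 = (1 - Real.cos s) / 2 := by
        have hpy := Real.sin_sq_add_cos_sq (s / 2)
        have h2 := Real.cos_two_mul (s / 2)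
        rw [show 2 * (s / 2) = s by ring] at h2
        linarith
      rw [div_pow, hhalf]
      field_simp
      linear_combination (12 : ℝ) * hk
    have hsα : s ^ α ≠ 0 := (Real.rpow_pos_of_pos hspos α).ne'
    rw [hnum, Real.rpow_sub hspos,
      show ((4 : ℝ)) = ((4 : ℕ) : ℝ) by norm_num, Real.rpow_natCast]
    field_simp
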